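/- arXiv:1102.3517 — 5 statements merged into one kernel-verified Lean document; each statement's English description precedes it below -/
import Mathlib

section
/- Let {ξₖ}_{k≥0} be i.i.d. complex random variables with E[log(1+|ξ₀|)] < ∞ and P(ξ₀ = 0) < 1. Then with probability one the radius of convergence of the power series ∑_{k=0}^∞ ξₖ z^k equals 1. -/
/-!
Upper bound: since `log (1 + |ξ₀|)` is integrable, `∑ₖ ℙ(log (1 + |ξₖ|) > ε k) < ∞` for every
`ε > 0`, so by the first Borel–Cantelli lemma `|ξₖ| ≤ e^{ε k}` eventually, almost surely.
Lower bound: `ξ₀ ≠ 0` with positive probability, so `ℙ(|ξ₀| > c) > 0` for some `c > 0`; by the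
second Borel–Cantelli lemma `|ξₖ| > c` for infinitely many `k`, and `c^{1/k} → 1`.
-/

open MeasureTheory ProbabilityTheory Filter Topology
open scoped ENNReal NNReal

lemma limsup_rpow_inv_le_exp {r : ℕ → ℝ≥0} {ε : ℝ}
    (h : ∀ᶠ k in atTop, (r k : ℝ) ≤ Real.exp (ε * k)) :
    limsup (fun k : ℕ => (r k : ℝ≥0∞) ^ ((1 : ℝ) / k)) atTop ≤ ENNReal.ofReal (Real.exp ε) := by
  refine limsup_le_of_le (h := ?_)
  filter_upwards [h, eventually_ne_atTop 0] with k hk hk0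
  calc (r k : ℝ≥0∞) ^ ((1 : ℝ) / k) ≤ ENNReal.ofReal (Real.exp (ε * k)) ^ ((1 : ℝ) / k) := by
        rw [← ENNReal.ofReal_coe_nnreal]; gcongr
    _ = ENNReal.ofReal (Real.exp ε) := by
        rw [ENNReal.ofReal_rpow_of_pos (Real.exp_pos _), ← Real.exp_mul]; field_simp

lemma limsup_rpow_inv_le_one {r : ℕ → ℝ≥0}
    (h : ∀ ε > 0, ∀ᶠ k in atTop, (r k : ℝ) ≤ Real.exp (ε * k)) :
    limsup (fun k : ℕ => (r k : ℝ≥0∞) ^ ((1 : ℝ) / k)) atTop ≤ 1 := by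
  have hlim : Tendsto (fun ε => ENNReal.ofReal (Real.exp ε)) (𝓝[>] 0) (𝓝 1) := by
    have hcont : Continuous fun ε => ENNReal.ofReal (Real.exp ε) :=
      ENNReal.continuous_ofReal.comp Real.continuous_exp
    simpa using (hcont.tendsto 0).mono_left nhdsWithin_le_nhds
  exact ge_of_tendsto hlim
    (eventually_mem_nhdsWithin.mono fun ε hε => limsup_rpow_inv_le_exp (h ε hε))

lemma one_le_limsup_rpow_inv {r : ℕ → ℝ≥0} {c : ℝ≥0} (hc : 0 < c)
    (h : ∃ᶠ k in atTop, c < r k) :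
    1 ≤ limsup (fun k : ℕ => (r k : ℝ≥0∞) ^ ((1 : ℝ) / k)) atTop := by
  have hlim : Tendsto (fun k : ℕ => (c : ℝ≥0∞) ^ ((1 : ℝ) / k)) atTop (𝓝 1) := by
    have := tendsto_const_nhds.nnrpow tendsto_one_div_atTop_nhds_zero_nat (Or.inl hc.ne')
    simpa [ENNReal.coe_rpow_of_ne_zero hc.ne'] using ENNReal.tendsto_coe.2 this
  refine le_of_forall_lt_imp_le_of_dense fun a ha => le_limsup_of_frequently_le' ?_
  refine (h.and_eventually (hlim.eventually (eventually_ge_nhds ha))).mono fun k hk => ?_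
  exact hk.2.trans (by gcongr; exact_mod_cast hk.1.le)

lemma le_exp_of_log_one_add_le {x y : ℝ} (hx : 0 ≤ x) (h : Real.log (1 + x) ≤ y) :
    x ≤ Real.exp y := by
  have := (Real.log_le_iff_le_exp (by linarith)).1 h
  linarith

section

variable {Ω : Type*} [MeasureSpace Ω] [IsProbabilityMeasure (ℙ : Measure Ω)]

lemma ae_eventually_le_mul_of_identDistrib {Y : ℕ → Ω → ℝ}
    (hid : ∀ k, IdentDistrib (Y k) (Y 0) ℙ ℙ) (hint : Integrable (Y 0)) {ε : ℝ} (hε : 0 < ε) :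
    ∀ᵐ ω, ∀ᶠ k : ℕ in atTop, Y k ω ≤ ε * k := by
  have hle : ∀ k : ℕ, ℙ {ω | ε * k < Y k ω} ≤ ℙ {ω | |Y 0 ω| / ε ∈ Set.Ioi (k : ℝ)} := by
    intro k
    rw [show {ω | ε * k < Y k ω} = Y k ⁻¹' Set.Ioi (ε * k) from rfl,
      (hid k).measure_mem_eq measurableSet_Ioi]
    refine measure_mono fun ω hω => ?_
    simp only [Set.mem_ofPred_eq, Set.mem_Ioi, lt_div_iff₀ hε, Set.mem_preimage] at hω ⊢
    linarith [le_abs_self (Y 0 ω)]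
  have hsum : ∑' k : ℕ, ℙ {ω | ε * k < Y k ω} ≠ ∞ :=
    ne_top_of_le_ne_top (tsum_prob_mem_Ioi_lt_top (hint.abs.div_const ε)
      fun ω => div_nonneg (abs_nonneg _) hε.le).ne (ENNReal.tsum_le_tsum hle)
  filter_upwards [ae_eventually_notMem hsum] with ω hω
  exact hω.mono fun k hk => not_lt.1 hk

lemma ae_forall_pos_eventually_le_mul_of_identDistrib {Y : ℕ → Ω → ℝ}
    (hid : ∀ k, IdentDistrib (Y k) (Y 0) ℙ ℙ) (hint : Integrable (Y 0)) :
    ∀ᵐ ω, ∀ ε > 0, ∀ᶠ k : ℕ in atTop, Y k ω ≤ ε * k := by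
  have h := ae_all_iff.2 fun n : ℕ =>
    ae_eventually_le_mul_of_identDistrib hid hint (Nat.one_div_pos_of_nat (n := n))
  filter_upwards [h] with ω hω ε hε
  obtain ⟨n, hn⟩ := exists_nat_one_div_lt hε
  exact (hω n).mono fun k hk => hk.trans (by gcongr)

end

section

variable {Ω : Type*} {mΩ : MeasurableSpace Ω} {μ : Measure Ω}

lemma ae_frequently_mem_of_iIndepFun_identDistrib {β : Type*} [MeasurableSpace β]
    {X : ℕ → Ω → β} (hm : ∀ k, Measurable (X k)) (hindep : iIndepFun X μ)
    (hid : ∀ k, IdentDistrib (X k) (X 0) μ μ) {S : Set β} (hS : MeasurableSet S)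
    (hpos : μ (X 0 ⁻¹' S) ≠ 0) :
    ∀ᵐ ω ∂μ, ∃ᶠ k in atTop, X k ω ∈ S := by
  have := hindep.isProbabilityMeasure
  set B : ℕ → Set Ω := fun k => X k ⁻¹' S
  have hB : ∀ k, MeasurableSet (B k) := fun k => hm k hS
  have hBindep : iIndepSet B μ :=
    (iIndepSet_iff_meas_biInter hB).2 fun s => hindep.meas_biInter fun k _ => ⟨S, hS, rfl⟩
  have hsum : ∑' k, μ (B k) = ∞ := by
    rw [tsum_congr fun k => (hid k).measure_mem_eq hS]
    exact ENNReal.tsum_const_eq_top_of_ne_zero hpos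
  have hlimsup := (mem_ae_iff_prob_eq_one (MeasurableSet.measurableSet_limsup hB)).2
    (measure_limsup_eq_one hB hBindep hsum)
  filter_upwards [hlimsup] with ω hω
  exact mem_limsup_iff_frequently_mem.1 hω

lemma exists_pos_measure_setOf_lt_nnnorm_ne_zero [IsProbabilityMeasure μ] {E : Type*}
    [NormedAddCommGroup E] {X : Ω → E} (h : μ {ω | X ω = 0} < 1) :
    ∃ c : ℝ≥0, 0 < c ∧ μ {ω | c < ‖X ω‖₊} ≠ 0 := by
  by_contra! hnull
  have hcover : {ω | X ω ≠ 0} ⊆ ⋃ n : ℕ, {ω | 1 / ((n : ℝ≥0) + 1) < ‖X ω‖₊} := fun ω hω =>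
    Set.mem_iUnion.2 (exists_nat_one_div_lt (nnnorm_pos.2 hω))
  have hae : ∀ᵐ ω ∂μ, X ω = 0 := by
    refine measure_mono_null hcover (measure_iUnion_null fun n => hnull _ ?_)
    positivity
  rw [measure_congr (eventuallyEq_univ.2 hae), measure_univ] at h
  exact lt_irrefl _ h

end

theorem radius_of_convergence_one {Ω : Type*} [MeasureSpace Ω]
    [IsProbabilityMeasure (ℙ : Measure Ω)] (ξ : ℕ → Ω → ℂ)
    (hm : ∀ k, Measurable (ξ k))
    (hindep : iIndepFun ξ ℙ)
    (hid : ∀ k, IdentDistrib (ξ k) (ξ 0) ℙ ℙ)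
    (hint : Integrable (fun ω => Real.log (1 + ‖ξ 0 ω‖)))
    (hnz : ℙ {ω | ξ 0 ω = 0} < 1) :
    ℙ {ω | Filter.limsup (fun k : ℕ => (‖ξ k ω‖₊ : ENNReal) ^ ((1 : ℝ) / k)) atTop = 1} = 1 := by
  have hlog : Measurable fun z : ℂ => Real.log (1 + ‖z‖) := by fun_prop
  have upper : ∀ᵐ ω, limsup (fun k : ℕ => (‖ξ k ω‖₊ : ℝ≥0∞) ^ ((1 : ℝ) / k)) atTop ≤ 1 := by
    filter_upwards [ae_forall_pos_eventually_le_mul_of_identDistrib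
      (fun k => (hid k).comp hlog) hint] with ω hω
    exact limsup_rpow_inv_le_one fun ε hε =>
      (hω ε hε).mono fun k hk => le_exp_of_log_one_add_le (norm_nonneg _) hk
  obtain ⟨c, hc, hpos⟩ := exists_pos_measure_setOf_lt_nnnorm_ne_zero hnz
  have lower : ∀ᵐ ω, 1 ≤ limsup (fun k : ℕ => (‖ξ k ω‖₊ : ℝ≥0∞) ^ ((1 : ℝ) / k)) atTop := by
    filter_upwards [ae_frequently_mem_of_iIndepFun_identDistrib hm hindep hid
      (measurableSet_lt measurable_const measurable_nnnorm) hpos] with ω hω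
    exact one_le_limsup_rpow_inv hc hω
  rw [measure_congr (eventuallyEq_univ.2 ?_), measure_univ]
  filter_upwards [upper, lower] with ω using le_antisymm
end

section
/- Let ξ₀,...,ξₙ be complex numbers with ξ₀ ≠ 0 and such that |ξₙ|^{1/n} > max_{1≤i≤n−1} |ξᵢ|^{1/i}, |ξₙ|^{1/n} > 3/ε, and |ξ₀| < 2^{n−1} for some ε > 0. Then every root z of the polynomial G(z) = ∑_{k=0}^n ξₖ z^k satisfies |z| < ε. -/
/-!
Suppose `‖z‖ ≥ ε` and put `R = ‖ξ n‖ ^ (1 / n)` and `t = R ‖z‖`, so that `t > 3`. The leading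
term `ξ n z ^ n` has norm `t ^ n`. Each middle term has norm `‖ξ k‖ ‖z‖ ^ k < t ^ k`, and these sum
to at most `t ^ n / 2` because `t ≥ 3`; the constant term is smaller than `2 ^ (n - 1) ≤ t ^ n / 2`.
So the leading term strictly dominates all the others and `z` cannot be a root.
-/

open Finset

lemma sum_range_succ_ne_zero_of_sum_norm_lt {E : Type*} [SeminormedAddCommGroup E]
    (f : ℕ → E) (n : ℕ) (h : ∑ k ∈ range n, ‖f k‖ < ‖f n‖) :
    ∑ k ∈ range (n + 1), f k ≠ 0 := by
  rw [sum_range_succ]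
  intro hsum
  have : ‖f n‖ ≤ ∑ k ∈ range n, ‖f k‖ := by
    rw [eq_neg_of_add_eq_zero_right hsum, norm_neg]
    exact norm_sum_le _ _
  linarith

lemma geom_sum_le_half_pow {t : ℝ} (ht : 3 ≤ t) (m : ℕ) :
    ∑ k ∈ range m, t ^ k ≤ t ^ m / 2 := by
  induction m with
  | zero => norm_num
  | succ m ih =>
    rw [sum_range_succ, pow_succ]
    nlinarith [pow_nonneg (by linarith : (0 : ℝ) ≤ t) m]

lemma sum_range_mul_pow_lt_mul_pow {c : ℕ → ℝ} {r R : ℝ} {n : ℕ} (hn : n ≠ 0)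
    (hr : 0 ≤ r) (hRr : 3 ≤ R * r) (hc : ∀ k, 1 ≤ k → k < n → c k ≤ R ^ k)
    (hc0 : c 0 < 2 ^ (n - 1)) :
    ∑ k ∈ range n, c k * r ^ k < R ^ n * r ^ n := by
  obtain ⟨m, rfl⟩ : ∃ m, n = m + 1 := Nat.exists_eq_succ_of_ne_zero hn
  rw [Nat.add_sub_cancel] at hc0
  set t := R * r
  have hmiddle : ∑ k ∈ range m, c (k + 1) * r ^ (k + 1) ≤ ∑ k ∈ range (m + 1), t ^ k :=
    calc ∑ k ∈ range m, c (k + 1) * r ^ (k + 1)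
        ≤ ∑ k ∈ range m, t ^ (k + 1) := by
          gcongr with k hk
          rw [mul_pow]
          exact mul_le_mul_of_nonneg_right
            (hc _ le_add_self (by simpa using mem_range.mp hk)) (pow_nonneg hr _)
      _ ≤ ∑ k ∈ range (m + 1), t ^ k := by
          rw [sum_range_succ' (fun k ↦ t ^ k)]
          simp
  have hconst : (2 : ℝ) ^ m * 2 ≤ t ^ (m + 1) := by
    rw [← pow_succ]
    exact pow_le_pow_left₀ (by norm_num) (by linarith) _
  calc ∑ k ∈ range (m + 1), c k * r ^ k
      = ∑ k ∈ range m, c (k + 1) * r ^ (k + 1) + c 0 := by simp [sum_range_succ']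
    _ < t ^ (m + 1) / 2 + 2 ^ m := by
        linarith [geom_sum_le_half_pow (by linarith : 3 ≤ t) (m + 1)]
    _ ≤ R ^ (m + 1) * r ^ (m + 1) := by rw [← mul_pow]; linarith

theorem all_roots_small_general (n : ℕ) (hn : 2 ≤ n) (ξ : ℕ → ℂ) (ε : ℝ) (hε : 0 < ε)
    (hmax : ∀ i : ℕ, 1 ≤ i → i ≤ n - 1 →
      ‖ξ i‖ ^ ((1 : ℝ) / i) < ‖ξ n‖ ^ ((1 : ℝ) / n))
    (hbig : 3 / ε < ‖ξ n‖ ^ ((1 : ℝ) / n))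
    (hsmall : ‖ξ 0‖ < 2 ^ (n - 1)) :
    ∀ z : ℂ, (∑ k ∈ Finset.range (n + 1), ξ k * z ^ k) = 0 → ‖z‖ < ε := by
  intro z hz
  by_contra! hεz
  set R := ‖ξ n‖ ^ ((1 : ℝ) / n)
  have hRz : 3 ≤ R * ‖z‖ :=
    calc (3 : ℝ) = 3 / ε * ε := (div_mul_cancel₀ _ hε.ne').symm
      _ ≤ R * ‖z‖ := mul_le_mul hbig.le hεz hε.le (hbig.le.trans' (by positivity))
  have hlead : ‖ξ n‖ = R ^ n := by
    rw [show R = ‖ξ n‖ ^ ((n : ℝ)⁻¹) by simp only [R, one_div],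
      Real.rpow_inv_natCast_pow (norm_nonneg _) (by omega)]
  have hcoeff : ∀ k, 1 ≤ k → k < n → ‖ξ k‖ ≤ R ^ k := fun k hk hkn ↦ by
    have := hmax k hk (by omega)
    rw [one_div, Real.rpow_inv_lt_iff_of_pos (norm_nonneg _) (by positivity)
      (by exact_mod_cast hk), Real.rpow_natCast] at this
    exact this.le
  refine sum_range_succ_ne_zero_of_sum_norm_lt (fun k ↦ ξ k * z ^ k) n ?_ hz
  simpa only [norm_mul, norm_pow, hlead] using
    sum_range_mul_pow_lt_mul_pow (by omega) (norm_nonneg z) hRz hcoeff hsmall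

theorem all_roots_small (n : ℕ) (hn : 2 ≤ n) (ξ : ℕ → ℂ) (h0 : ξ 0 ≠ 0) (ε : ℝ) (hε : 0 < ε)
    (hmax : ∀ i : ℕ, 1 ≤ i → i ≤ n - 1 →
      ‖ξ i‖ ^ ((1 : ℝ) / i) < ‖ξ n‖ ^ ((1 : ℝ) / n))
    (hbig : 3 / ε < ‖ξ n‖ ^ ((1 : ℝ) / n))
    (hsmall : ‖ξ 0‖ < 2 ^ (n - 1)) :
    ∀ z : ℂ, (∑ k ∈ Finset.range (n + 1), ξ k * z ^ k) = 0 → ‖z‖ < ε :=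
  all_roots_small_general n hn ξ ε hε hmax hbig hsmall
end

section
/- Let p(x) be a real polynomial of degree n with p(a) ≠ 0 and p(b) ≠ 0 for some a < b, and for x ∈ ℝ let Z_p(x) denote the number of sign changes in the sequence p(x), p'(x), ..., p^{(n)}(x) (after deleting zero terms). Then the number of real roots of p in (a,b), counted with multiplicity, is at most Z_p(a) − Z_p(b), and the difference between Z_p(a) − Z_p(b) and this number of roots is even. -/
/-!
At a point `c`, let `mₖ` be the multiplicity of `c` as a root of `p⁽ᵏ⁾`. Since
`p⁽ᵏ⁾(x) ≈ p⁽ᵏ⁺ᵐᵏ⁾(c) (x - c)^mₖ / mₖ!` near `c`, just right of `c` each `p⁽ᵏ⁾(x)` has the sign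
of the first nonzero term of `p⁽ᵏ⁾(c), p⁽ᵏ⁺¹⁾(c), …`, so `Z_p(x) = Z_p(c)`. Just left of `c` that
sign is multiplied by `(-1)^mₖ`, and a run of `m` zeros then produces `m` more sign changes up to
an even number, so `Z_p(x) = Z_p(c) + m₀ + 2d`. Hence `x ↦ Z_p(x) + #{roots ≤ x}` is locally
constant to the right of every point and exceeds its value there by an even number just to the
left, and a real induction shows that it decreases by even steps along `ℝ`.
-/

/-- Number of sign changes in a list of reals, assuming zeros already removed. -/
noncomputable def signChangesAux : List ℝ → ℕ
  | [] => 0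
  | [_] => 0
  | a :: b :: t => (if a * b < 0 then 1 else 0) + signChangesAux (b :: t)

/-- Number of sign changes of a finite sequence of reals: delete zero terms,
then count adjacent pairs of opposite signs. -/
noncomputable def signChanges (l : List ℝ) : ℕ :=
  signChangesAux (l.filter (fun x => decide (x ≠ 0)))

/-- `Z_p(x)`: the number of sign changes in the sequence `p(x), p'(x), ..., p⁽ⁿ⁾(x)`. -/
noncomputable def Zp (p : Polynomial ℝ) (x : ℝ) : ℕ :=
  signChanges ((List.range (p.natDegree + 1)).map
    (fun j => ((Polynomial.derivative)^[j] p).eval x))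

open Set Filter Topology Polynomial

theorem rel_of_lt_of_eventually_nhdsGT_nhdsLT {α : Type*} [ConditionallyCompleteLinearOrder α]
    [TopologicalSpace α] [OrderTopology α] [DenselyOrdered α] {r : α → α → Prop}
    (htrans : ∀ {x y z}, r x y → r y z → r x z) (hright : ∀ c, ∀ᶠ x in 𝓝[>] c, r c x)
    (hleft : ∀ c, ∀ᶠ x in 𝓝[<] c, r x c) {a b : α} (hab : a < b) : r a b := by
  set A := {t | t ≤ b ∧ ∀ y ∈ Ioc a t, r a y}
  have haA : a ∈ A := ⟨hab.le, fun y hy => absurd hy.2 (not_le.2 hy.1)⟩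
  have hbdd : BddAbove A := ⟨b, fun t ht => ht.1⟩
  have hextend : ∀ x ∈ A, x < b → (∀ᶠ z in 𝓝[>] x, r a z) → ∃ t ∈ A, x < t := by
    intro x hxA hxb hx
    obtain ⟨m, hxm, hm⟩ := (mem_nhdsGT_iff_exists_Ioo_subset' hxb).mp hx
    obtain ⟨t, hxt, htm⟩ := exists_between (lt_min hxm hxb)
    refine ⟨t, ⟨htm.le.trans (min_le_right _ _), fun y hy => ?_⟩, hxt⟩
    rcases le_or_gt y x with hyx | hxy
    · exact hxA.2 y ⟨hy.1, hyx⟩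
    · exact hm ⟨hxy, hy.2.trans_lt (htm.trans_le (min_le_left _ _))⟩
  set s := sSup A
  have has : a < s := by
    obtain ⟨t, htA, hat⟩ := hextend a haA hab (hright a)
    exact hat.trans_le (le_csSup hbdd htA)
  have hrs : r a s := by
    obtain ⟨m, hms, hm⟩ := (mem_nhdsLT_iff_exists_Ioo_subset' has).mp (hleft s)
    obtain ⟨y, hy, hys⟩ := exists_between (max_lt has hms)
    obtain ⟨t, htA, hyt⟩ := exists_lt_of_lt_csSup ⟨a, haA⟩ hys
    exact htrans (htA.2 y ⟨(le_max_left _ _).trans_lt hy, hyt.le⟩)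
      (hm ⟨(le_max_right _ _).trans_lt hy, hys⟩)
  have hsA : s ∈ A := by
    refine ⟨csSup_le ⟨a, haA⟩ fun t ht => ht.1, fun y hy => ?_⟩
    rcases hy.2.lt_or_eq with hys | rfl
    · obtain ⟨t, htA, hyt⟩ := exists_lt_of_lt_csSup ⟨a, haA⟩ hys
      exact htA.2 y ⟨hy.1, hyt.le⟩
    · exact hrs
  obtain hsb | hsb := hsA.1.lt_or_eq
  · obtain ⟨t, htA, hst⟩ := hextend s hsA hsb ((hright s).mono fun _ => htrans hrs)
    exact absurd (le_csSup hbdd htA) (not_le.2 hst)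
  · exact hsb ▸ hrs

noncomputable def firstNonzero (l : List ℝ) : ℝ :=
  (l.filter (fun x => decide (x ≠ 0))).headD 0

noncomputable def leadingZeros (l : List ℝ) : ℕ :=
  (l.takeWhile (fun x => decide (x = 0))).length

@[simp] lemma firstNonzero_nil : firstNonzero [] = 0 := rfl

@[simp] lemma firstNonzero_cons_zero (l : List ℝ) : firstNonzero (0 :: l) = firstNonzero l := by
  simp [firstNonzero]

lemma firstNonzero_cons_of_ne_zero {x : ℝ} (hx : x ≠ 0) (l : List ℝ) :
    firstNonzero (x :: l) = x := by
  simp [firstNonzero, hx]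

@[simp] lemma leadingZeros_nil : leadingZeros [] = 0 := rfl

@[simp] lemma leadingZeros_cons_zero (l : List ℝ) :
    leadingZeros (0 :: l) = leadingZeros l + 1 := by
  simp [leadingZeros]

lemma leadingZeros_cons_of_ne_zero {x : ℝ} (hx : x ≠ 0) (l : List ℝ) :
    leadingZeros (x :: l) = 0 := by
  simp [leadingZeros, hx]

@[simp] lemma signChanges_cons_zero (l : List ℝ) : signChanges (0 :: l) = signChanges l := by
  simp [signChanges]

lemma signChanges_cons_of_ne_zero {x : ℝ} (hx : x ≠ 0) (l : List ℝ) :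
    signChanges (x :: l) = (if x * firstNonzero l < 0 then 1 else 0) + signChanges l := by
  unfold signChanges firstNonzero
  rw [List.filter_cons_of_pos (by simpa using hx)]
  cases l.filter (fun x => decide (x ≠ 0)) <;> simp [signChangesAux]

lemma firstNonzero_eq_getD_and_leadingZeros_eq (l : List ℝ) {m : ℕ}
    (hzero : ∀ i < m, l.getD i 0 = 0) (hm : l.getD m 0 ≠ 0) :
    firstNonzero l = l.getD m 0 ∧ leadingZeros l = m := by
  induction m generalizing l with
  | zero =>
    cases l with
    | nil => simp at hm
    | cons x t =>
      simp only [List.getD_cons_zero] at hm ⊢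
      exact ⟨firstNonzero_cons_of_ne_zero hm t, leadingZeros_cons_of_ne_zero hm t⟩
  | succ m ih =>
    cases l with
    | nil => simp at hm
    | cons x t =>
      obtain rfl : x = 0 := by simpa using hzero 0 m.succ_pos
      simpa using ih t (fun i hi => by simpa using hzero (i + 1) (by omega)) (by simpa using hm)

lemma mul_neg_iff_of_pos_mul {x y u v : ℝ} (hxu : 0 < x * u) (hyv : 0 < y * v) :
    x * y < 0 ↔ u * v < 0 := by
  have h : 0 < (x * y) * (u * v) := by nlinarith [mul_pos hxu hyv]
  constructor <;> intro hneg <;> nlinarith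

lemma forall_lt_length_cons {P : ℝ → List ℝ → Prop} {w v : ℝ} {W V : List ℝ} :
    (∀ i < (v :: V).length, P ((w :: W).getD i 0) ((v :: V).drop i)) ↔
      P w (v :: V) ∧ ∀ i < V.length, P (W.getD i 0) (V.drop i) := by
  simp only [List.length_cons, Nat.forall_lt_succ_left, List.getD_cons_zero, List.drop_zero,
    List.getD_cons_succ, List.drop_succ_cons]

lemma firstNonzero_of_forall_lt_length {P : ℝ → List ℝ → Prop} (hP : ∀ t, ¬ P 0 t)
    {V W : List ℝ} (hV : V ≠ []) (hlen : W.length = V.length)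
    (h : ∀ i < V.length, P (W.getD i 0) (V.drop i)) : P (firstNonzero W) V := by
  obtain ⟨v, V, rfl⟩ := List.exists_cons_of_ne_nil hV
  obtain ⟨w, W, rfl⟩ := List.exists_cons_of_length_eq_add_one hlen
  have h0 := (forall_lt_length_cons.mp h).1
  rwa [firstNonzero_cons_of_ne_zero (by rintro rfl; exact hP _ h0)]

theorem signChanges_eq_of_forall_pos_mul_firstNonzero {V W : List ℝ}
    (hlen : W.length = V.length)
    (h : ∀ i < V.length, 0 < W.getD i 0 * firstNonzero (V.drop i)) :
    signChanges W = signChanges V := by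
  induction V generalizing W with
  | nil => rw [List.length_eq_zero_iff.mp hlen]
  | cons v V ih =>
    obtain ⟨w, W, rfl⟩ := List.exists_cons_of_length_eq_add_one hlen
    obtain ⟨h0, htail⟩ := (forall_lt_length_cons (P := fun w t => 0 < w * firstNonzero t)).mp h
    replace hlen : W.length = V.length := by simpa using hlen
    have hw : w ≠ 0 := by rintro rfl; simp at h0
    have htailfn : V ≠ [] → 0 < firstNonzero W * firstNonzero V := fun hV =>
      firstNonzero_of_forall_lt_length (P := fun w t => 0 < w * firstNonzero t) (by simp) hV
        hlen htail
    rw [signChanges_cons_of_ne_zero hw, ih hlen htail]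
    by_cases hv : v = 0
    · subst hv
      rw [firstNonzero_cons_zero] at h0
      have hV : V ≠ [] := by rintro rfl; simp at h0
      have : ¬ w * firstNonzero W < 0 := by
        rw [mul_neg_iff_of_pos_mul h0 (htailfn hV)]
        exact (mul_self_nonneg _).not_gt
      simp [this]
    · rw [firstNonzero_cons_of_ne_zero hv] at h0
      rw [signChanges_cons_of_ne_zero hv]
      rcases eq_or_ne V [] with rfl | hV
      · simp [List.length_eq_zero_iff.mp hlen]
      · rw [if_congr (mul_neg_iff_of_pos_mul h0 (htailfn hV)) rfl rfl]

lemma exists_ite_add_eq_ite_add_two_mul {x y u v : ℝ} {k : ℕ} (hxu : 0 < x * u)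
    (hyv : 0 < (-1) ^ k * y * v) :
    ∃ e, (if x * y < 0 then 1 else 0) + k = (if u * v < 0 then 1 else 0) + 2 * e := by
  rcases k.even_or_odd with hk | hk
  · rw [hk.neg_one_pow, one_mul] at hyv
    obtain ⟨j, rfl⟩ := hk
    exact ⟨j, by rw [if_congr (mul_neg_iff_of_pos_mul hxu hyv) rfl rfl]; ring⟩
  · rw [hk.neg_one_pow, neg_one_mul] at hyv
    have hiff := mul_neg_iff_of_pos_mul hxu hyv
    have hxy : x * y ≠ 0 := mul_ne_zero (by rintro rfl; simp at hxu) (by rintro rfl; simp at hyv)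
    obtain ⟨j, rfl⟩ := hk
    by_cases huv : u * v < 0
    · have : ¬ x * y < 0 := by linarith [hiff.mpr huv]
      exact ⟨j, by simp [huv, this]; ring⟩
    · have : x * y < 0 := by
        have := mt hiff.mp huv
        rw [mul_neg, neg_lt_zero, not_lt] at this
        exact this.lt_of_ne hxy
      exact ⟨j + 1, by simp [huv, this]; ring⟩

theorem exists_signChanges_eq_add_leadingZeros_add_two_mul {V W : List ℝ}
    (hlen : W.length = V.length)
    (h : ∀ i < V.length,
      0 < (-1) ^ leadingZeros (V.drop i) * W.getD i 0 * firstNonzero (V.drop i)) :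
    ∃ d, signChanges W = signChanges V + leadingZeros V + 2 * d := by
  induction V generalizing W with
  | nil => exact ⟨0, by rw [List.length_eq_zero_iff.mp hlen]; rfl⟩
  | cons v V ih =>
    obtain ⟨w, W, rfl⟩ := List.exists_cons_of_length_eq_add_one hlen
    obtain ⟨h0, htail⟩ := (forall_lt_length_cons
      (P := fun w t => 0 < (-1) ^ leadingZeros t * w * firstNonzero t)).mp h
    replace hlen : W.length = V.length := by simpa using hlen
    have hw : w ≠ 0 := by rintro rfl; simp at h0
    have htailfn : V ≠ [] → 0 < (-1) ^ leadingZeros V * firstNonzero W * firstNonzero V :=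
      fun hV => firstNonzero_of_forall_lt_length
        (P := fun w t => 0 < (-1) ^ leadingZeros t * w * firstNonzero t) (by simp) hV hlen htail
    obtain ⟨d, hd⟩ := ih hlen htail
    rw [signChanges_cons_of_ne_zero hw, hd]
    by_cases hv : v = 0
    · subst hv
      simp only [firstNonzero_cons_zero, leadingZeros_cons_zero, pow_succ] at h0
      have hV : V ≠ [] := by rintro rfl; simp at h0
      set s : ℝ := (-1) ^ leadingZeros V
      have h1 : 0 < firstNonzero W * (s * firstNonzero V) := by linarith [htailfn hV]
      have hsV : s * firstNonzero V ≠ 0 := by rintro h; simp [h] at h1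
      have : w * firstNonzero W < 0 :=
        (mul_neg_iff_of_pos_mul (u := -(s * firstNonzero V)) (by linarith) h1).mpr
          (by rw [neg_mul, neg_lt_zero]; exact mul_self_pos.mpr hsV)
      exact ⟨d, by simp [this]; ring⟩
    · rw [firstNonzero_cons_of_ne_zero hv, leadingZeros_cons_of_ne_zero hv, pow_zero,
        one_mul] at h0
      rw [signChanges_cons_of_ne_zero hv, leadingZeros_cons_of_ne_zero hv]
      rcases eq_or_ne V [] with rfl | hV
      · exact ⟨d, by simp [List.length_eq_zero_iff.mp hlen]⟩
      · obtain ⟨e, he⟩ := exists_ite_add_eq_ite_add_two_mul h0 (htailfn hV)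
        exact ⟨d + e, by omega⟩

namespace Multiset
variable {α : Type*} [LinearOrder α]

lemma card_filter_le_eq_card_filter_lt_add_count [DecidableEq α] (s : Multiset α) (c : α) :
    card (s.filter (· ≤ c)) = card (s.filter (· < c)) + s.count c := by
  induction s using Multiset.induction_on with
  | empty => simp
  | cons r s ih =>
    rcases lt_trichotomy r c with h | rfl | h
    · simp [h, h.le, count_cons_of_ne h.ne', ih]; omega
    · simp [ih]; omega
    · simp [h.not_gt, h.not_ge, count_cons_of_ne h.ne, ih]

lemma card_filter_lt_eq_card_filter_le_add {a b : α} (hab : a < b) (s : Multiset α) :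
    card (s.filter (· < b)) =
      card (s.filter (· ≤ a)) + card (s.filter fun r => a < r ∧ r < b) := by
  induction s using Multiset.induction_on with
  | empty => simp
  | cons r s ih =>
    rcases le_or_gt r a with h | h
    · simp [h, h.trans_lt hab, h.not_gt, ih]; omega
    · by_cases hb : r < b
      · simp [h, hb, h.not_ge, ih]; omega
      · simp [h, hb, h.not_ge, ih]

variable [TopologicalSpace α] [OrderTopology α]

lemma eventually_filter_le_eq_nhdsGT (s : Multiset α) (c : α) :
    ∀ᶠ x in 𝓝[>] c, s.filter (· ≤ x) = s.filter (· ≤ c) := by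
  have : ∀ᶠ x in 𝓝[>] c, ∀ r ∈ s.toFinset, (r ≤ x ↔ r ≤ c) := by
    refine (eventually_all_finset _).2 fun r _ => ?_
    rcases le_or_gt r c with h | h
    · filter_upwards [self_mem_nhdsWithin] with x hx using iff_of_true (h.trans (le_of_lt hx)) h
    · filter_upwards [Ioo_mem_nhdsGT h] with x hx using iff_of_false hx.2.not_ge h.not_ge
  filter_upwards [this] with x hx using filter_congr fun r hr => hx r (mem_toFinset.2 hr)

lemma eventually_filter_le_eq_nhdsLT (s : Multiset α) (c : α) :
    ∀ᶠ x in 𝓝[<] c, s.filter (· ≤ x) = s.filter (· < c) := by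
  have : ∀ᶠ x in 𝓝[<] c, ∀ r ∈ s.toFinset, (r ≤ x ↔ r < c) := by
    refine (eventually_all_finset _).2 fun r _ => ?_
    rcases lt_or_ge r c with h | h
    · filter_upwards [Ioo_mem_nhdsLT h] with x hx using iff_of_true hx.1.le h
    · filter_upwards [self_mem_nhdsWithin] with x hx using
        iff_of_false (lt_of_lt_of_le hx h).not_ge h.not_gt
  filter_upwards [this] with x hx using filter_congr fun r hr => hx r (mem_toFinset.2 hr)

end Multiset

namespace Polynomial

lemma iterate_derivative_ne_zero {R : Type*} [Semiring R] [Module.IsTorsionFree ℕ R] {p : R[X]}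
    (hp : p ≠ 0) {k : ℕ} (hk : k ≤ p.natDegree) : derivative^[k] p ≠ 0 := by
  intro h
  have hcoeff := coeff_iterate_derivative (k := k) p (p.natDegree - k)
  rw [h, Nat.sub_add_cancel hk, coeff_zero, coeff_natDegree] at hcoeff
  exact smul_ne_zero (by simpa [Nat.descFactorial_eq_zero_iff_lt] using hk)
    (leadingCoeff_ne_zero.2 hp) hcoeff.symm

lemma eval_iterate_derivative_rootMultiplicity_ne_zero {R : Type*} [CommRing R] [IsDomain R]
    [Module.IsTorsionFree ℕ R] {p : R[X]} (hp : p ≠ 0) (t : R) :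
    (derivative^[p.rootMultiplicity t] p).eval t ≠ 0 := by
  rw [eval_iterate_derivative_rootMultiplicity]
  exact smul_ne_zero (Nat.factorial_ne_zero _) (eval_divByMonic_pow_rootMultiplicity_ne_zero t hp)

variable {q : ℝ[X]}

lemma eventually_pos_pow_mul_eval_mul_eval_iterate_derivative (hq : q ≠ 0) (c : ℝ) :
    ∀ᶠ x in 𝓝[≠] c, 0 < (x - c) ^ q.rootMultiplicity c * q.eval x *
      (derivative^[q.rootMultiplicity c] q).eval c := by
  set m := q.rootMultiplicity c
  set r := q /ₘ (X - C c) ^ m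
  have hq_eval (x : ℝ) : q.eval x = (x - c) ^ m * r.eval x := by
    conv_lhs => rw [← pow_mul_divByMonic_rootMultiplicity_eq q c]
    simp [m, r]
  have hD : (derivative^[m] q).eval c = m.factorial * r.eval c := by
    rw [eval_iterate_derivative_rootMultiplicity, nsmul_eq_mul]
  have hr : ∀ᶠ x in 𝓝 c, 0 < r.eval x * r.eval c :=
    (r.continuous.mul continuous_const).continuousAt.eventually
      (lt_mem_nhds (mul_self_pos.2 (eval_divByMonic_pow_rootMultiplicity_ne_zero c hq)))
  filter_upwards [nhdsWithin_le_nhds hr, self_mem_nhdsWithin] with x hx hxc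
  have hpow : 0 < ((x - c) ^ m) ^ 2 := by
    have : x - c ≠ 0 := sub_ne_zero.2 hxc
    positivity
  calc (0 : ℝ) < ((x - c) ^ m) ^ 2 * m.factorial * (r.eval x * r.eval c) := by positivity
    _ = _ := by rw [hq_eval, hD]; ring

lemma eventually_pos_eval_mul_eval_iterate_derivative_nhdsGT (hq : q ≠ 0) (c : ℝ) :
    ∀ᶠ x in 𝓝[>] c, 0 < q.eval x * (derivative^[q.rootMultiplicity c] q).eval c := by
  filter_upwards [nhdsWithin_mono c (fun x (hx : c < x) => hx.ne')
    (eventually_pos_pow_mul_eval_mul_eval_iterate_derivative hq c), self_mem_nhdsWithin]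
    with x hx hcx
  rw [mul_assoc] at hx
  exact pos_of_mul_pos_right hx (pow_nonneg (sub_nonneg.2 (le_of_lt hcx)) _)

lemma eventually_pos_neg_one_pow_mul_eval_mul_eval_iterate_derivative_nhdsLT (hq : q ≠ 0)
    (c : ℝ) : ∀ᶠ x in 𝓝[<] c, 0 < (-1) ^ q.rootMultiplicity c * q.eval x *
      (derivative^[q.rootMultiplicity c] q).eval c := by
  filter_upwards [nhdsWithin_mono c (fun x (hx : x < c) => hx.ne)
    (eventually_pos_pow_mul_eval_mul_eval_iterate_derivative hq c), self_mem_nhdsWithin]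
    with x hx hxc
  set m := q.rootMultiplicity c
  set D := (derivative^[m] q).eval c
  rw [show (x - c) ^ m * q.eval x * D = (c - x) ^ m * ((-1) ^ m * q.eval x * D) by
    rw [← neg_sub, neg_eq_neg_one_mul, mul_pow]; ring] at hx
  exact pos_of_mul_pos_right hx (pow_nonneg (sub_nonneg.2 (le_of_lt hxc)) _)

end Polynomial

section

noncomputable def derivativeValues (p : ℝ[X]) (x : ℝ) : List ℝ :=
  (List.range (p.natDegree + 1)).map fun j => (derivative^[j] p).eval x

variable {p : ℝ[X]}

lemma Zp_eq_signChanges_derivativeValues (p : ℝ[X]) (x : ℝ) :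
    Zp p x = signChanges (derivativeValues p x) := rfl

lemma length_derivativeValues (p : ℝ[X]) (x : ℝ) :
    (derivativeValues p x).length = p.natDegree + 1 := by
  simp [derivativeValues]

lemma getD_drop_derivativeValues (x : ℝ) {k i : ℕ} (h : k + i ≤ p.natDegree) :
    ((derivativeValues p x).drop k).getD i 0 = (derivative^[i] (derivative^[k] p)).eval x := by
  rw [← Function.iterate_add_apply, add_comm]
  simp [derivativeValues, List.getD_eq_getElem?_getD, List.getElem?_drop, Nat.lt_succ_of_le h]

lemma getD_derivativeValues (x : ℝ) {i : ℕ} (h : i ≤ p.natDegree) :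
    (derivativeValues p x).getD i 0 = (derivative^[i] p).eval x := by
  simpa using getD_drop_derivativeValues x (k := 0) (by simpa using h)

lemma firstNonzero_and_leadingZeros_drop_derivativeValues (hp : p ≠ 0) (c : ℝ) {k : ℕ}
    (hk : k ≤ p.natDegree) :
    firstNonzero ((derivativeValues p c).drop k) =
      (derivative^[(derivative^[k] p).rootMultiplicity c] (derivative^[k] p)).eval c ∧
    leadingZeros ((derivativeValues p c).drop k) = (derivative^[k] p).rootMultiplicity c := by
  set q := derivative^[k] p
  set m := q.rootMultiplicity c
  have hm : (derivative^[m] q).eval c ≠ 0 :=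
    eval_iterate_derivative_rootMultiplicity_ne_zero (iterate_derivative_ne_zero hp hk) c
  have hkm : k + m ≤ p.natDegree := by
    by_contra! h
    rw [← Function.iterate_add_apply, iterate_derivative_eq_zero (by omega)] at hm
    simp at hm
  rw [← getD_drop_derivativeValues c hkm] at hm ⊢
  refine firstNonzero_eq_getD_and_leadingZeros_eq _ (fun i hi => ?_) hm
  rw [getD_drop_derivativeValues c (by omega)]
  exact isRoot_iterate_derivative_of_lt_rootMultiplicity hi

lemma eventually_Zp_eq_nhdsGT (hp : p ≠ 0) (c : ℝ) : ∀ᶠ x in 𝓝[>] c, Zp p x = Zp p c := by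
  have hsign : ∀ᶠ x in 𝓝[>] c, ∀ k ∈ Finset.range (p.natDegree + 1),
      0 < (derivative^[k] p).eval x *
        (derivative^[(derivative^[k] p).rootMultiplicity c] (derivative^[k] p)).eval c :=
    (eventually_all_finset _).2 fun k hk => eventually_pos_eval_mul_eval_iterate_derivative_nhdsGT
      (iterate_derivative_ne_zero hp (Nat.lt_succ_iff.1 (Finset.mem_range.1 hk))) c
  filter_upwards [hsign] with x hx
  rw [Zp_eq_signChanges_derivativeValues, Zp_eq_signChanges_derivativeValues]
  refine signChanges_eq_of_forall_pos_mul_firstNonzero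
    (by rw [length_derivativeValues, length_derivativeValues]) fun i hi => ?_
  rw [length_derivativeValues] at hi
  have hin : i ≤ p.natDegree := Nat.lt_succ_iff.1 hi
  rw [(firstNonzero_and_leadingZeros_drop_derivativeValues hp c hin).1, getD_derivativeValues x hin]
  exact hx i (Finset.mem_range.2 hi)

lemma eventually_exists_Zp_eq_add_rootMultiplicity_nhdsLT (hp : p ≠ 0) (c : ℝ) :
    ∀ᶠ x in 𝓝[<] c, ∃ d, Zp p x = Zp p c + p.rootMultiplicity c + 2 * d := by
  have hsign : ∀ᶠ x in 𝓝[<] c, ∀ k ∈ Finset.range (p.natDegree + 1),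
      0 < (-1) ^ (derivative^[k] p).rootMultiplicity c * (derivative^[k] p).eval x *
        (derivative^[(derivative^[k] p).rootMultiplicity c] (derivative^[k] p)).eval c :=
    (eventually_all_finset _).2 fun k hk =>
      eventually_pos_neg_one_pow_mul_eval_mul_eval_iterate_derivative_nhdsLT
        (iterate_derivative_ne_zero hp (Nat.lt_succ_iff.1 (Finset.mem_range.1 hk))) c
  filter_upwards [hsign] with x hx
  have hlead : leadingZeros (derivativeValues p c) = p.rootMultiplicity c := by
    simpa using (firstNonzero_and_leadingZeros_drop_derivativeValues hp c p.natDegree.zero_le).2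
  rw [Zp_eq_signChanges_derivativeValues, Zp_eq_signChanges_derivativeValues, ← hlead]
  refine exists_signChanges_eq_add_leadingZeros_add_two_mul
    (by rw [length_derivativeValues, length_derivativeValues]) fun i hi => ?_
  rw [length_derivativeValues] at hi
  have hin : i ≤ p.natDegree := Nat.lt_succ_iff.1 hi
  obtain ⟨hfirst, hzeros⟩ := firstNonzero_and_leadingZeros_drop_derivativeValues hp c hin
  rw [hfirst, hzeros, getD_derivativeValues x hin]
  exact hx i (Finset.mem_range.2 hi)

theorem exists_Zp_add_card_roots_le_eq (hp : p ≠ 0) {a b : ℝ} (hab : a < b) :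
    ∃ d, Zp p a + Multiset.card (p.roots.filter (· ≤ a)) =
      Zp p b + Multiset.card (p.roots.filter (· ≤ b)) + 2 * d := by
  set G : ℝ → ℕ := fun x => Zp p x + Multiset.card (p.roots.filter (· ≤ x))
  refine rel_of_lt_of_eventually_nhdsGT_nhdsLT (r := fun x y => ∃ d, G x = G y + 2 * d)
    (fun ⟨d, hd⟩ ⟨e, he⟩ => ⟨d + e, by omega⟩) (fun c => ?_) (fun c => ?_) hab
  · filter_upwards [eventually_Zp_eq_nhdsGT hp c,
      p.roots.eventually_filter_le_eq_nhdsGT c] with x hZ hroots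
    exact ⟨0, by simp only [G, hZ, hroots]; ring⟩
  · filter_upwards [eventually_exists_Zp_eq_add_rootMultiplicity_nhdsLT hp c,
      p.roots.eventually_filter_le_eq_nhdsLT c] with x ⟨d, hZ⟩ hroots
    refine ⟨d, ?_⟩
    simp only [G, hZ, hroots, Multiset.card_filter_le_eq_card_filter_lt_add_count p.roots c,
      count_roots]
    ring

end

open scoped Classical in
theorem budan_fourier (p : Polynomial ℝ) (a b : ℝ) (hab : a < b)
    (ha : p.eval a ≠ 0) (hb : p.eval b ≠ 0) :
    ((((p.roots.filter (fun r => a < r ∧ r < b)).card : ℤ)) ≤ (Zp p a : ℤ) - Zp p b) ∧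
      Even ((Zp p a : ℤ) - (Zp p b : ℤ) -
        ((p.roots.filter (fun r => a < r ∧ r < b)).card : ℤ)) := by
  have hp : p ≠ 0 := by rintro rfl; simp at ha
  obtain ⟨d, hd⟩ := exists_Zp_add_card_roots_le_eq hp hab
  have hroots : Multiset.card (p.roots.filter (· ≤ b)) = Multiset.card (p.roots.filter (· ≤ a)) +
      Multiset.card (p.roots.filter fun r => a < r ∧ r < b) := by
    rw [Multiset.card_filter_le_eq_card_filter_lt_add_count, count_roots,
      rootMultiplicity_eq_zero hb, add_zero, Multiset.card_filter_lt_eq_card_filter_le_add hab]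
  refine ⟨by omega, d, by omega⟩
end

section
/- Let p(x) be a real polynomial of degree n and Z_p(x) the number of sign changes in the sequence p(x), p'(x), ..., p^{(n)}(x). Then Z_p is non-increasing on ℝ: if x ≤ y then Z_p(x) ≥ Z_p(y). -/
/-!
`Z_p` is lower semicontinuous: a nonzero `p⁽ʲ⁾(x)` keeps its sign near `x`, and replacing the
zero terms of a sequence by nonzero numbers can only add sign changes. It also cannot increase
just to the right of a point `x₀`: there a root of `q = p⁽ʲ⁾` at `x₀` forces `q` to have the
sign of `q'`, so every block of zeros in `p(x₀), p'(x₀), …` takes on the sign of the next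
nonzero term and no sign change appears. A lower semicontinuous function with this
right-hand property is antitone, by real induction on `[a, b]`.
-/

open Polynomial Filter Topology Set

theorem mul_neg_iff_of_mul_pos {x y : ℝ} (h : 0 < x * y) (z : ℝ) : z * x < 0 ↔ z * y < 0 := by
  constructor <;> intro hz <;> nlinarith [mul_pos h (mul_self_pos.2 (left_ne_zero_of_mul hz.ne))]

theorem signChangesAux_cons_zero (l : List ℝ) : signChangesAux (0 :: l) = signChangesAux l := by
  cases l <;> simp [signChangesAux]

theorem signChangesAux_cons_congr {x y : ℝ} (h : 0 < x * y) (l : List ℝ) :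
    signChangesAux (x :: l) = signChangesAux (y :: l) := by
  cases l with
  | nil => rfl
  | cons z t => simp only [signChangesAux, mul_comm _ z, mul_neg_iff_of_mul_pos h]

theorem signChangesAux_cons_cons_cons_of_mul_pos {x y : ℝ} (h : 0 < x * y) (c : ℝ)
    (l : List ℝ) :
    signChangesAux (c :: x :: y :: l) = signChangesAux (c :: y :: l) := by
  simp only [signChangesAux, mul_neg_iff_of_mul_pos h, not_lt.2 h.le, if_false, zero_add]

theorem signChangesAux_cons_le_cons_cons {y : ℝ} (hy : y ≠ 0) (c : ℝ) (l : List ℝ) :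
    signChangesAux (c :: l) ≤ signChangesAux (c :: y :: l) := by
  cases l with
  | nil => simp [signChangesAux]
  | cons z t =>
    have : c * z < 0 → c * y < 0 ∨ y * z < 0 := fun hcz => by
      by_contra! h
      nlinarith [mul_nonneg h.1 h.2, mul_pos (mul_self_pos.2 hy) (neg_pos.2 hcz)]
    simp only [signChangesAux]
    split_ifs <;> first | omega | simp_all

/- The head `c` stands for the last nonzero term before the list, whose sign the induction has
to carry along; `c = 0` gives back the plain count. -/
theorem signChangesAux_cons_filter_le_of_forall₂ {l m : List ℝ}
    (h : List.Forall₂ (fun x y => x ≠ 0 → 0 < x * y) l m) (c : ℝ) :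
    signChangesAux (c :: l.filter (· ≠ 0)) ≤ signChangesAux (c :: m.filter (· ≠ 0)) := by
  induction h generalizing c with
  | nil => exact le_rfl
  | @cons x y l m hxy _ ih =>
    by_cases hx : x = 0
    · rw [hx, List.filter_cons_of_neg (by simp)]
      by_cases hy : y = 0
      · rw [hy, List.filter_cons_of_neg (by simp)]
        exact ih c
      · rw [List.filter_cons_of_pos (by simpa using hy)]
        exact (ih c).trans (signChangesAux_cons_le_cons_cons hy c _)
    · have hxy := hxy hx
      rw [List.filter_cons_of_pos (by simpa using hx),
        List.filter_cons_of_pos (by simpa using right_ne_zero_of_mul hxy.ne')]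
      simp only [signChangesAux, mul_neg_iff_of_mul_pos hxy, signChangesAux_cons_congr hxy]
      exact Nat.add_le_add_left (ih y) _

theorem signChanges_le_of_forall₂ {l m : List ℝ}
    (h : List.Forall₂ (fun x y => x ≠ 0 → 0 < x * y) l m) :
    signChanges l ≤ signChanges m := by
  simpa only [signChanges, signChangesAux_cons_zero] using
    signChangesAux_cons_filter_le_of_forall₂ h 0

theorem map_range_succ {α : Type*} (g : ℕ → α) (n : ℕ) :
    (List.range (n + 1)).map g = g 0 :: (List.range n).map (fun j => g (j + 1)) := by
  simp [List.range_succ_eq_map]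

theorem signChangesAux_cons_map_range_le (c : ℝ) {n : ℕ} {f g : ℕ → ℝ} (hn : f n ≠ 0)
    (hne : ∀ j ≤ n, f j ≠ 0 → 0 < f j * g j)
    (hzero : ∀ j < n, f j = 0 → 0 < g j * g (j + 1)) :
    signChangesAux (c :: (List.range (n + 1)).map g) ≤
      signChangesAux (c :: ((List.range (n + 1)).map f).filter (· ≠ 0)) := by
  induction n generalizing c f g with
  | zero =>
    have h := hne 0 le_rfl hn
    simp [hn, signChangesAux, mul_neg_iff_of_mul_pos h]
  | succ n ih =>
    have ih' := fun c => ih c (f := fun j => f (j + 1)) (g := fun j => g (j + 1)) hn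
      (fun j hj => hne (j + 1) (by omega)) (fun j hj => hzero (j + 1) (by omega))
    rw [map_range_succ f, map_range_succ g]
    by_cases hf : f 0 = 0
    · rw [hf, List.filter_cons_of_neg (by simp), map_range_succ (fun j => g (j + 1)),
        signChangesAux_cons_cons_cons_of_mul_pos (hzero 0 n.succ_pos hf)]
      have h := ih' c
      rwa [map_range_succ (fun j => g (j + 1))] at h
    · have h := hne 0 (by omega) hf
      rw [List.filter_cons_of_pos (by simpa using hf)]
      simp only [signChangesAux, mul_neg_iff_of_mul_pos h, signChangesAux_cons_congr h]
      exact Nat.add_le_add_left (ih' (g 0)) _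

theorem signChanges_map_range_le {n : ℕ} {f g : ℕ → ℝ} (hn : f n ≠ 0)
    (hne : ∀ j ≤ n, f j ≠ 0 → 0 < f j * g j)
    (hzero : ∀ j < n, f j = 0 → 0 < g j * g (j + 1)) :
    signChanges ((List.range (n + 1)).map g) ≤ signChanges ((List.range (n + 1)).map f) := by
  have hg : ∀ j ≤ n, g j ≠ 0 := fun j hj => by
    by_cases hf : f j = 0
    · exact left_ne_zero_of_mul (hzero j (hj.lt_of_ne (by rintro rfl; exact hn hf)) hf).ne'
    · exact right_ne_zero_of_mul (hne j hj hf).ne'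
  rw [signChanges, List.filter_eq_self.2 (by simpa [Nat.lt_succ_iff] using hg)]
  simpa only [signChanges, signChangesAux_cons_zero] using
    signChangesAux_cons_map_range_le 0 hn hne hzero

theorem eval_iterate_derivative_natDegree {R : Type*} [Semiring R] (p : R[X]) (x : R) :
    (derivative^[p.natDegree] p).eval x = p.natDegree.factorial * p.leadingCoeff := by
  rw [eq_C_of_natDegree_le_zero ((natDegree_iterate_derivative p _).trans (Nat.sub_self _).le),
    eval_C, coeff_iterate_derivative, zero_add, Nat.descFactorial_self, nsmul_eq_mul, leadingCoeff]

theorem eventually_pos_eval_mul_eval_derivative {q : ℝ[X]} (hq : q ≠ 0) {x₀ : ℝ}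
    (hx₀ : q.eval x₀ = 0) : ∀ᶠ y in 𝓝[>] x₀, 0 < q.eval y * (derivative q).eval y := by
  obtain ⟨r, hqr, hr⟩ := exists_eq_pow_rootMultiplicity_mul_and_not_dvd q hq x₀
  obtain ⟨k, hk⟩ := Nat.exists_eq_add_one_of_ne_zero ((rootMultiplicity_pos hq).2 hx₀).ne'
  rw [dvd_iff_isRoot, IsRoot.def] at hr
  rw [hk] at hqr
  set F : ℝ → ℝ := fun y => r.eval y * ((k + 1) * r.eval y + (y - x₀) * (derivative r).eval y)
  have hfac : ∀ y, q.eval y * (derivative q).eval y = (y - x₀) ^ (2 * k + 1) * F y := by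
    intro y
    rw [hqr]
    simp only [eval_mul, eval_pow, eval_sub, eval_X, eval_C, derivative_mul,
      derivative_X_sub_C_pow, Nat.cast_add, Nat.cast_one, map_add, map_natCast, map_one,
      add_tsub_cancel_right, eval_add, eval_natCast, eval_one, F]
    ring
  have hF : Continuous F := by fun_prop
  have hF₀ : 0 < F x₀ := by
    have hr : r.eval x₀ ≠ 0 := hr
    have : F x₀ = (k + 1) * r.eval x₀ ^ 2 := by simp only [F]; ring
    rw [this]
    positivity
  filter_upwards [self_mem_nhdsWithin,
    ((hF.tendsto x₀).eventually_const_lt hF₀).filter_mono nhdsWithin_le_nhds] with y hy hFy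
  rw [hfac]
  exact mul_pos (pow_pos (sub_pos.2 hy) _) hFy

theorem eventually_forall_le_mul_pos {X : Type*} [TopologicalSpace X] {F : ℕ → X → ℝ}
    (hF : ∀ j, Continuous (F j)) (n : ℕ) (x₀ : X) :
    ∀ᶠ y in 𝓝 x₀, ∀ j ≤ n, F j x₀ ≠ 0 → 0 < F j x₀ * F j y := by
  refine (eventually_all_finite (finite_Iic n)).2 fun j _ =>
    eventually_imp_distrib_left.2 fun h =>
      ((continuous_const.mul (hF j)).tendsto x₀).eventually_const_lt (mul_self_pos.2 h)

theorem lowerSemicontinuous_Zp (p : ℝ[X]) : LowerSemicontinuous (Zp p) := by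
  intro x₀ m hm
  filter_upwards [eventually_forall_le_mul_pos (fun j => (derivative^[j] p).continuous)
    p.natDegree x₀] with y hy
  refine hm.trans_le (signChanges_le_of_forall₂ ?_)
  simp only [List.forall₂_map_left_iff, List.forall₂_map_right_iff, List.forall₂_same,
    List.mem_range, Nat.lt_succ_iff]
  exact hy

theorem eventually_Zp_le (p : ℝ[X]) (x₀ : ℝ) : ∀ᶠ y in 𝓝[>] x₀, Zp p y ≤ Zp p x₀ := by
  rcases eq_or_ne p 0 with rfl | hp
  · simp [Zp]
  have htop : ∀ x, (derivative^[p.natDegree] p).eval x ≠ 0 := fun x => by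
    simp [eval_iterate_derivative_natDegree, hp, Nat.factorial_ne_zero]
  have hne_zero : ∀ j ≤ p.natDegree, derivative^[j] p ≠ 0 := fun j hj h => htop x₀ <| by
    rw [← Nat.sub_add_cancel hj, Function.iterate_add_apply, h, iterate_derivative_zero, eval_zero]
  have hroot : ∀ j < p.natDegree, ∀ᶠ y in 𝓝[>] x₀, (derivative^[j] p).eval x₀ = 0 →
      0 < (derivative^[j] p).eval y * (derivative^[j + 1] p).eval y := fun j hj =>
    eventually_imp_distrib_left.2 fun h => by
      simpa only [Function.iterate_succ_apply'] using
        eventually_pos_eval_mul_eval_derivative (hne_zero j hj.le) h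
  filter_upwards [(eventually_forall_le_mul_pos (fun j => (derivative^[j] p).continuous)
      p.natDegree x₀).filter_mono nhdsWithin_le_nhds,
    (eventually_all_finite (finite_Iio p.natDegree)).2 hroot] with y hsign hsucc
  exact signChanges_map_range_le (htop x₀) hsign hsucc

theorem LowerSemicontinuous.antitone_of_eventually_le {α β : Type*}
    [ConditionallyCompleteLinearOrder α] [TopologicalSpace α] [OrderTopology α]
    [DenselyOrdered α] [LinearOrder β] {f : α → β} (hf : LowerSemicontinuous f)
    (hright : ∀ x, ∀ᶠ y in 𝓝[>] x, f y ≤ f x) : Antitone f := fun a _ hab =>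
  ((hf.isClosed_preimage (f a)).inter isClosed_Icc).Icc_subset_of_forall_mem_nhdsWithin le_rfl
    (fun x hx => (hright x).mono fun _ hy => hy.trans hx.1) (right_mem_Icc.2 hab)

theorem Zp_antitone (p : Polynomial ℝ) : Antitone (Zp p) :=
  (lowerSemicontinuous_Zp p).antitone_of_eventually_le (eventually_Zp_le p)
end

section
/- Fix λ ∈ (0,1/2), an integer n ≥ 1, and an integer k with λn ≤ k ≤ (1−λ)n. Define A_{k,l} = l(l−1)⋯(l−k+1). Then for all integers j₁, j₂ with (1−λ/2)n ≤ j₂ ≤ j₁ ≤ n, one has A_{k,j₂}/A_{k,j₁} ≤ exp(−(λ/2)(j₁ − j₂)). -/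
/-!
From `(m + 1 - k) · A_{k,m+1} = (m + 1) · A_{k,m}` and `1 - c ≤ exp (-c)`, each unit step
down from `m + 1` to `m` multiplies `A_{k,·}` by `1 - k/(m + 1) ≤ exp (-c)` as soon as
`c (m + 1) ≤ k`. With `c = λ/2` this holds for every `m < j₁ ≤ n` because `λ n ≤ k`, and
chaining the `j₁ - j₂` steps gives the bound.
-/

open Real

/-- Truncated subtraction makes the left side `0` when `a < k`. -/
lemma natCast_sub_le_mul_exp_neg {a k : ℕ} {c : ℝ} (h : c * a ≤ k) :
    ((a - k : ℕ) : ℝ) ≤ a * exp (-c) := by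
  have ha : (0 : ℝ) ≤ a := Nat.cast_nonneg a
  rcases le_or_gt k a with hka | hak
  · rw [Nat.cast_sub hka]
    calc (a : ℝ) - k ≤ a * (-c + 1) := by linarith
      _ ≤ a * exp (-c) := mul_le_mul_of_nonneg_left (add_one_le_exp _) ha
  · rw [Nat.sub_eq_zero_of_le hak.le, Nat.cast_zero]
    positivity

lemma descFactorial_le_exp_neg_mul_succ {m k : ℕ} {c : ℝ} (h : c * (m + 1) ≤ k) :
    (m.descFactorial k : ℝ) ≤ exp (-c) * (m + 1).descFactorial k := by
  have hstep : ((m + 1 - k : ℕ) : ℝ) * (m + 1).descFactorial k = (m + 1) * m.descFactorial k := by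
    exact_mod_cast Nat.succ_descFactorial m k
  have hsub : ((m + 1 - k : ℕ) : ℝ) ≤ (m + 1) * exp (-c) := by
    exact_mod_cast natCast_sub_le_mul_exp_neg (a := m + 1) (by exact_mod_cast h)
  have hm : (0 : ℝ) < m + 1 := by positivity
  refine le_of_mul_le_mul_left ?_ hm
  calc ((m : ℝ) + 1) * m.descFactorial k
      = ((m + 1 - k : ℕ) : ℝ) * (m + 1).descFactorial k := hstep.symm
    _ ≤ (m + 1) * exp (-c) * (m + 1).descFactorial k := by gcongr
    _ = (m + 1) * (exp (-c) * (m + 1).descFactorial k) := by ring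

lemma descFactorial_le_exp_neg_mul {j₂ j₁ k : ℕ} {c : ℝ} (hc₀ : 0 ≤ c) (hj : j₂ ≤ j₁)
    (hc : c * j₁ ≤ k) :
    (j₂.descFactorial k : ℝ) ≤ exp (-c * (j₁ - j₂)) * j₁.descFactorial k := by
  induction j₁, hj using Nat.le_induction with
  | base => simp
  | succ m _ ih =>
    push_cast at hc ⊢
    calc (j₂.descFactorial k : ℝ)
        ≤ exp (-c * (m - j₂)) * m.descFactorial k := ih (by nlinarith)
      _ ≤ exp (-c * (m - j₂)) * (exp (-c) * (m + 1).descFactorial k) := by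
          gcongr
          exact descFactorial_le_exp_neg_mul_succ hc
      _ = exp (-c * (m + 1 - j₂)) * (m + 1).descFactorial k := by
          rw [← mul_assoc, ← exp_add]
          ring_nf

lemma descFactorial_div_descFactorial_le_exp_neg {j₂ j₁ k : ℕ} {c : ℝ} (hc₀ : 0 ≤ c)
    (hj : j₂ ≤ j₁) (hc : c * j₁ ≤ k) :
    (j₂.descFactorial k : ℝ) / j₁.descFactorial k ≤ exp (-c * (j₁ - j₂)) :=
  div_le_of_le_mul₀ (Nat.cast_nonneg _) (exp_nonneg _) (descFactorial_le_exp_neg_mul hc₀ hj hc)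

theorem descFactorial_ratio_exp_bound_general (lam : ℝ) (hlam : lam ∈ Set.Ioo (0 : ℝ) (1 / 2))
    (n k : ℕ) (hk₁ : lam * n ≤ k)
    (j₁ j₂ : ℕ) (hj : j₂ ≤ j₁) (hj₁ : j₁ ≤ n) :
    (j₂.descFactorial k : ℝ) / (j₁.descFactorial k : ℝ) ≤
      Real.exp (-(lam / 2) * ((j₁ : ℝ) - (j₂ : ℝ))) := by
  have hlam₀ : 0 < lam := hlam.1
  have hj₁' : (j₁ : ℝ) ≤ n := by exact_mod_cast hj₁
  have hc : lam / 2 * j₁ ≤ k := by nlinarith [Nat.cast_nonneg (α := ℝ) j₁]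
  exact descFactorial_div_descFactorial_le_exp_neg (by positivity) hj hc

theorem descFactorial_ratio_exp_bound (lam : ℝ) (hlam : lam ∈ Set.Ioo (0 : ℝ) (1 / 2))
    (n k : ℕ) (hn : 1 ≤ n) (hk₁ : lam * n ≤ k) (hk₂ : (k : ℝ) ≤ (1 - lam) * n)
    (j₁ j₂ : ℕ) (hj₂ : (1 - lam / 2) * n ≤ (j₂ : ℝ)) (hj : j₂ ≤ j₁) (hj₁ : j₁ ≤ n) :
    (j₂.descFactorial k : ℝ) / (j₁.descFactorial k : ℝ) ≤
      Real.exp (-(lam / 2) * ((j₁ : ℝ) - (j₂ : ℝ))) :=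
  descFactorial_ratio_exp_bound_general lam hlam n k hk₁ j₁ j₂ hj hj₁
end
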